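/- arXiv:2411.15962 — 2 statements merged into one kernel-verified Lean document; each statement's English description precedes it below -/
import Mathlib

section
/- For every t ≥ 0 one has t ≤ G⁻¹(t) ≤ √6 · t. -/
/-! Since `(√6)⁻¹ ≤ g ≤ 1`, the primitive `G` satisfies `(b - a)/√6 ≤ G b - G a ≤ b - a` for
`a ≤ b`. Hence `G` is continuous and strictly increasing with `G 0 = 0`, so by the intermediate
value theorem `x = G⁻¹ t` is the unique `x ≥ 0` with `G x = t`, and `x/√6 ≤ G x = t ≤ x`. -/

open Real Filter Topology

/-- The piecewise function `g` from the paper: `g(t) = sqrt(1 - κ t^2)` for `|t| < sqrt(1/(3κ))`,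
and `g(t) = 1/(3 sqrt(2κ) |t|) + sqrt(1/6)` for `|t| ≥ sqrt(1/(3κ))`; in particular `g` is even. -/
noncomputable def gfun (κ : ℝ) (t : ℝ) : ℝ :=
  if |t| < Real.sqrt (1 / (3 * κ)) then Real.sqrt (1 - κ * t ^ 2)
  else 1 / (3 * Real.sqrt (2 * κ) * |t|) + Real.sqrt (1 / 6)

/-- `G(t) = ∫ s in [0,t], g(s) ds`. -/
noncomputable def Gfun (κ : ℝ) (t : ℝ) : ℝ := ∫ s in (0:ℝ)..t, gfun κ s

/-- `G⁻¹`, the inverse function of `G`. -/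
noncomputable def Ginv (κ : ℝ) : ℝ → ℝ := Function.invFun (Gfun κ)

open MeasureTheory Set

section IntegralBounds

variable {f : ℝ → ℝ} {m M a b : ℝ}

lemma mul_sub_le_integral_of_le (hab : a ≤ b) (hf : IntervalIntegrable f volume a b)
    (h : ∀ x ∈ Icc a b, m ≤ f x) : m * (b - a) ≤ ∫ x in a..b, f x :=
  calc m * (b - a) = ∫ _ in a..b, m := by
        rw [intervalIntegral.integral_const, smul_eq_mul, mul_comm]
    _ ≤ ∫ x in a..b, f x := intervalIntegral.integral_mono_on hab intervalIntegrable_const hf h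

lemma integral_le_mul_sub_of_le (hab : a ≤ b) (hf : IntervalIntegrable f volume a b)
    (h : ∀ x ∈ Icc a b, f x ≤ M) : ∫ x in a..b, f x ≤ M * (b - a) :=
  calc ∫ x in a..b, f x ≤ ∫ _ in a..b, M :=
        intervalIntegral.integral_mono_on hab hf intervalIntegrable_const h
    _ = M * (b - a) := by rw [intervalIntegral.integral_const, smul_eq_mul, mul_comm]

end IntegralBounds

section InverseOfExpanding

variable {F : ℝ → ℝ} {m M t : ℝ}

lemma strictMono_of_mul_sub_le (hm : 0 < m) (hF : ∀ a b, a ≤ b → m * (b - a) ≤ F b - F a) :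
    StrictMono F := fun a b hab => by nlinarith [hF a b hab.le]

/-- The intermediate value theorem on `[0, t / m]` provides a preimage of `t ≥ 0`. -/
lemma exists_apply_eq_of_mul_sub_le (hc : Continuous F) (hF0 : F 0 = 0) (hm : 0 < m)
    (hF : ∀ a b, a ≤ b → m * (b - a) ≤ F b - F a) (ht : 0 ≤ t) : ∃ x, F x = t := by
  have htm : 0 ≤ t / m := div_nonneg ht hm.le
  have hle : t ≤ F (t / m) := by
    have := hF 0 (t / m) htm
    rwa [hF0, sub_zero, sub_zero, mul_div_cancel₀ t hm.ne'] at this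
  obtain ⟨x, -, hx⟩ := intermediate_value_Icc htm hc.continuousOn ⟨by rwa [hF0], hle⟩
  exact ⟨x, hx⟩

lemma le_mul_invFun_and_mul_invFun_le (hc : Continuous F) (hF0 : F 0 = 0) (hm : 0 < m)
    (hlo : ∀ a b, a ≤ b → m * (b - a) ≤ F b - F a)
    (hhi : ∀ a b, a ≤ b → F b - F a ≤ M * (b - a)) (ht : 0 ≤ t) :
    t ≤ M * Function.invFun F t ∧ m * Function.invFun F t ≤ t := by
  set x := Function.invFun F t
  have hFx : F x = t := Function.invFun_eq (exists_apply_eq_of_mul_sub_le hc hF0 hm hlo ht)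
  have hx : 0 ≤ x := (strictMono_of_mul_sub_le hm hlo).le_iff_le.mp (by rwa [hF0, hFx])
  have hlo' := hlo 0 x hx
  have hhi' := hhi 0 x hx
  rw [hFx, hF0, sub_zero, sub_zero] at hlo' hhi'
  exact ⟨hhi', hlo'⟩

end InverseOfExpanding

lemma sqrt_one_div_six : √(1 / 6) = (√6)⁻¹ := by rw [one_div, Real.sqrt_inv]

section Gfun

variable (κ : ℝ) (hκ : 0 < κ)
include hκ

lemma inv_sqrt_six_le_gfun (s : ℝ) : (√6)⁻¹ ≤ gfun κ s := by
  rw [gfun, ← sqrt_one_div_six]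
  split_ifs with h
  · have hs : s ^ 2 < 1 / (3 * κ) := by
      rw [← sq_abs]; exact (Real.lt_sqrt (abs_nonneg s)).mp h
    rw [lt_div_iff₀ (by positivity)] at hs
    exact Real.sqrt_le_sqrt (by nlinarith)
  · exact le_add_of_nonneg_left (by positivity)

lemma gfun_le_one (s : ℝ) : gfun κ s ≤ 1 := by
  rw [gfun, sqrt_one_div_six]
  split_ifs with h
  · exact Real.sqrt_le_one.mpr (by nlinarith [sq_nonneg s])
  · have hs : 1 / (3 * κ) ≤ s ^ 2 := by
      rw [← sq_abs]; exact (Real.sqrt_le_left (abs_nonneg s)).mp (not_lt.mp h)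
    rw [div_le_iff₀ (by positivity)] at hs
    have h6 : √6 ≤ 3 * √(2 * κ) * |s| := by
      rw [Real.sqrt_le_left (by positivity), mul_pow, mul_pow, sq_abs,
        Real.sq_sqrt (by positivity)]
      nlinarith
    have h2 : 2 ≤ √6 := Real.le_sqrt_of_sq_le (by norm_num)
    calc 1 / (3 * √(2 * κ) * |s|) + (√6)⁻¹ ≤ (√6)⁻¹ + (√6)⁻¹ := by
          rw [one_div]; gcongr
      _ ≤ 1 := by
          rw [← two_mul, ← div_eq_mul_inv, div_le_one (by positivity)]; exact h2

omit hκ in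
lemma measurable_gfun : Measurable (gfun κ) :=
  Measurable.ite (measurableSet_lt (by fun_prop) measurable_const) (by fun_prop) (by fun_prop)

lemma intervalIntegrable_gfun (a b : ℝ) : IntervalIntegrable (gfun κ) volume a b := by
  refine (intervalIntegrable_const (c := (1 : ℝ))).mono_fun
    (measurable_gfun κ).aestronglyMeasurable.restrict (Eventually.of_forall fun s => ?_)
  have hg : 0 ≤ gfun κ s :=
    (inv_nonneg.mpr (Real.sqrt_nonneg 6)).trans (inv_sqrt_six_le_gfun κ hκ s)
  simpa [abs_of_nonneg hg] using gfun_le_one κ hκ s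

lemma continuous_Gfun : Continuous (Gfun κ) :=
  intervalIntegral.continuous_primitive (intervalIntegrable_gfun κ hκ) 0

omit hκ in
lemma Gfun_zero : Gfun κ 0 = 0 := intervalIntegral.integral_same

lemma Gfun_sub_Gfun (a b : ℝ) : Gfun κ b - Gfun κ a = ∫ s in a..b, gfun κ s :=
  intervalIntegral.integral_interval_sub_left (intervalIntegrable_gfun κ hκ 0 b)
    (intervalIntegrable_gfun κ hκ 0 a)

lemma inv_sqrt_six_mul_sub_le_Gfun_sub {a b : ℝ} (hab : a ≤ b) :
    (√6)⁻¹ * (b - a) ≤ Gfun κ b - Gfun κ a := by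
  rw [Gfun_sub_Gfun κ hκ]
  exact mul_sub_le_integral_of_le hab (intervalIntegrable_gfun κ hκ a b)
    fun s _ => inv_sqrt_six_le_gfun κ hκ s

lemma Gfun_sub_le_sub {a b : ℝ} (hab : a ≤ b) : Gfun κ b - Gfun κ a ≤ b - a := by
  rw [Gfun_sub_Gfun κ hκ]
  simpa using integral_le_mul_sub_of_le (M := 1) hab (intervalIntegrable_gfun κ hκ a b)
    fun s _ => gfun_le_one κ hκ s

end Gfun

/-- `t ≤ G⁻¹ t ≤ sqrt 6 * t` for every `t ≥ 0`. -/
theorem stmt_8 (κ : ℝ) (hκ : 0 < κ) :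
    ∀ t : ℝ, 0 ≤ t → t ≤ Ginv κ t ∧ Ginv κ t ≤ Real.sqrt 6 * t := by
  intro t ht
  obtain ⟨hle, hge⟩ := le_mul_invFun_and_mul_invFun_le (continuous_Gfun κ hκ) (Gfun_zero κ)
    (by positivity) (fun _ _ => inv_sqrt_six_mul_sub_le_Gfun_sub κ hκ)
    (M := 1) (fun _ _ h => by simpa using Gfun_sub_le_sub κ hκ h) ht
  rw [one_mul] at hle
  exact ⟨hle, (inv_mul_le_iff₀ (by positivity)).mp hge⟩
end

section
/- For every t ≥ 0 one has -1/2 ≤ t · g'(t) / g(t) ≤ 0, where g' denotes the derivative of g. -/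
/-!
Write `c = √(1/(3κ))`, so that `κ c² = 1/3`, and note `1/(3√(2κ)) = √(1/6) c`.
For `|t| < c`, `g = √(1 - κt²)` and `t g'/g = -κt²/(1 - κt²)` with `κt² < 1/3`;
for `t ≥ c`, `g = √(1/6) (c/t + 1)` and `t g'/g = -(c/t)/(c/t + 1)` with `c/t ≤ 1`.
Both expressions lie in `[-1/2, 0]`. At `t = c` the two branches have the same value `√(2/3)`
and the same slope `-√(1/6)/c`, so the one-sided derivatives glue and `c g'(c)/g(c) = -1/2`.
-/

open Real Set

noncomputable def gfunBreakpoint (κ : ℝ) : ℝ := √(1 / (3 * κ))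

section

variable {κ : ℝ}

lemma gfunBreakpoint_pos (hκ : 0 < κ) : 0 < gfunBreakpoint κ :=
  sqrt_pos.2 (by positivity)

lemma mul_gfunBreakpoint_sq (hκ : 0 < κ) : κ * gfunBreakpoint κ ^ 2 = 1 / 3 := by
  rw [gfunBreakpoint, sq_sqrt (by positivity)]
  field_simp

lemma sqrt_one_sub_mul_gfunBreakpoint_sq (hκ : 0 < κ) :
    √(1 - κ * gfunBreakpoint κ ^ 2) = 2 * √(1 / 6) := by
  rw [mul_gfunBreakpoint_sq hκ, show (1 : ℝ) - 1 / 3 = 2 ^ 2 * (1 / 6) by norm_num,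
    sqrt_mul (by norm_num), sqrt_sq zero_le_two]

lemma one_div_three_mul_sqrt_two_mul (hκ : 0 < κ) :
    1 / (3 * √(2 * κ)) = √(1 / 6) * gfunBreakpoint κ := by
  rw [gfunBreakpoint, ← sqrt_mul (by norm_num),
    show (1 : ℝ) / 6 * (1 / (3 * κ)) = (3 ^ 2 * (2 * κ))⁻¹ by field_simp; ring,
    sqrt_inv, sqrt_mul (by norm_num : (0 : ℝ) ≤ 3 ^ 2) (2 * κ), sqrt_sq (by norm_num), one_div]

lemma gfun_of_abs_lt {t : ℝ} (ht : |t| < gfunBreakpoint κ) : gfun κ t = √(1 - κ * t ^ 2) :=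
  if_pos ht

lemma gfun_of_le_abs (hκ : 0 < κ) {t : ℝ} (ht : gfunBreakpoint κ ≤ |t|) :
    gfun κ t = √(1 / 6) * (gfunBreakpoint κ / |t| + 1) := by
  rw [gfun, if_neg (show ¬|t| < √(1 / (3 * κ)) from ht.not_gt), ← div_div,
    one_div_three_mul_sqrt_two_mul hκ]
  ring

lemma gfun_of_gfunBreakpoint_le (hκ : 0 < κ) {t : ℝ} (ht : gfunBreakpoint κ ≤ t) :
    gfun κ t = √(1 / 6) * (gfunBreakpoint κ / t + 1) := by
  rw [gfun_of_le_abs hκ (ht.trans (le_abs_self t)),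
    abs_of_pos ((gfunBreakpoint_pos hκ).trans_le ht)]

lemma gfun_of_abs_le (hκ : 0 < κ) {t : ℝ} (ht : |t| ≤ gfunBreakpoint κ) :
    gfun κ t = √(1 - κ * t ^ 2) := by
  rcases ht.lt_or_eq with ht | ht
  · exact gfun_of_abs_lt ht
  · rw [gfun_of_le_abs hκ ht.ge, ← sq_abs t, ht, div_self (gfunBreakpoint_pos hκ).ne',
      sqrt_one_sub_mul_gfunBreakpoint_sq hκ]
    ring

lemma hasDerivAt_sqrt_one_sub_mul_sq {t : ℝ} (ht : 0 < 1 - κ * t ^ 2) :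
    HasDerivAt (fun x => √(1 - κ * x ^ 2)) (-(κ * t) / √(1 - κ * t ^ 2)) t := by
  have h := (((hasDerivAt_pow 2 t).const_mul κ).const_sub 1).sqrt ht.ne'
  convert h using 1
  field_simp
  ring

lemma mul_sq_le_of_abs_le (hκ : 0 < κ) {t : ℝ} (ht : |t| ≤ gfunBreakpoint κ) :
    κ * t ^ 2 ≤ 1 / 3 := by
  rw [← mul_gfunBreakpoint_sq hκ, ← sq_abs t]
  gcongr

lemma one_sub_mul_sq_pos (hκ : 0 < κ) {t : ℝ} (ht : |t| ≤ gfunBreakpoint κ) :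
    0 < 1 - κ * t ^ 2 := by
  linarith [mul_sq_le_of_abs_le hκ ht]

lemma hasDerivAt_gfun_of_abs_lt (hκ : 0 < κ) {t : ℝ} (ht : |t| < gfunBreakpoint κ) :
    HasDerivAt (gfun κ) (-(κ * t) / √(1 - κ * t ^ 2)) t := by
  refine (hasDerivAt_sqrt_one_sub_mul_sq (one_sub_mul_sq_pos hκ ht.le)).congr_of_eventuallyEq ?_
  filter_upwards [(isOpen_lt continuous_abs continuous_const).mem_nhds ht] with x hx
  exact gfun_of_abs_lt hx

lemma hasDerivAt_mul_div_add_one (a b : ℝ) {t : ℝ} (ht : t ≠ 0) :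
    HasDerivAt (fun x => a * (b / x + 1)) (-(a * b / t ^ 2)) t :=
  ((((hasDerivAt_inv ht).const_mul b).add_const 1).const_mul a).congr_deriv (by ring)

lemma hasDerivAt_gfun_of_gfunBreakpoint_lt (hκ : 0 < κ) {t : ℝ} (ht : gfunBreakpoint κ < t) :
    HasDerivAt (gfun κ) (-(√(1 / 6) * gfunBreakpoint κ / t ^ 2)) t := by
  have ht0 : t ≠ 0 := ((gfunBreakpoint_pos hκ).trans ht).ne'
  refine (hasDerivAt_mul_div_add_one _ _ ht0).congr_of_eventuallyEq ?_
  filter_upwards [Ioi_mem_nhds ht] with x hx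
  exact gfun_of_gfunBreakpoint_le hκ hx.le

lemma hasDerivAt_gfun_gfunBreakpoint (hκ : 0 < κ) :
    HasDerivAt (gfun κ) (-(√(1 / 6) / gfunBreakpoint κ)) (gfunBreakpoint κ) := by
  have hκc := mul_gfunBreakpoint_sq hκ
  set c := gfunBreakpoint κ
  have hc : 0 < c := gfunBreakpoint_pos hκ
  have hleft : HasDerivWithinAt (gfun κ) (-(√(1 / 6) / c)) (Iic c) c := by
    have hsqrt := hasDerivAt_sqrt_one_sub_mul_sq (one_sub_mul_sq_pos hκ (abs_of_pos hc).le)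
    have h : HasDerivWithinAt (gfun κ) _ (Iic c ∩ Ioi (-c)) c :=
      hsqrt.hasDerivWithinAt.congr (fun x hx => gfun_of_abs_le hκ (abs_le.2 ⟨hx.2.le, hx.1⟩))
        (gfun_of_abs_le hκ (abs_of_pos hc).le)
    rw [hasDerivWithinAt_inter (Ioi_mem_nhds (neg_lt_self hc))] at h
    refine h.congr_deriv ?_
    have hq : √(1 / 6) ^ 2 = 1 / 6 := sq_sqrt (by norm_num)
    rw [sqrt_one_sub_mul_gfunBreakpoint_sq hκ]
    field_simp
    linear_combination -hκc + 2 * hq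
  have hright : HasDerivWithinAt (gfun κ) (-(√(1 / 6) / c)) (Ici c) c := by
    refine ((hasDerivAt_mul_div_add_one _ _ hc.ne').hasDerivWithinAt.congr
      (fun x hx => gfun_of_gfunBreakpoint_le hκ hx)
      (gfun_of_gfunBreakpoint_le hκ le_rfl)).congr_deriv ?_
    rw [sq, ← div_div, mul_div_cancel_right₀ _ hc.ne']
  have h := hleft.union hright
  rw [Iic_union_Ici] at h
  exact h.hasDerivAt Filter.univ_mem

lemma mul_deriv_gfun_div_of_abs_lt (hκ : 0 < κ) {t : ℝ} (ht : |t| < gfunBreakpoint κ) :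
    t * deriv (gfun κ) t / gfun κ t = -(κ * t ^ 2) / (1 - κ * t ^ 2) := by
  have hs := one_sub_mul_sq_pos hκ ht.le
  rw [(hasDerivAt_gfun_of_abs_lt hκ ht).deriv, gfun_of_abs_lt ht, mul_div_assoc, div_div,
    mul_self_sqrt hs.le]
  ring

lemma mul_deriv_gfun_div_of_gfunBreakpoint_lt (hκ : 0 < κ) {t : ℝ}
    (ht : gfunBreakpoint κ < t) :
    t * deriv (gfun κ) t / gfun κ t = -(gfunBreakpoint κ / t) / (gfunBreakpoint κ / t + 1) := by
  have ht0 : t ≠ 0 := ((gfunBreakpoint_pos hκ).trans ht).ne'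
  have hq : √(1 / 6) ≠ 0 := by positivity
  rw [(hasDerivAt_gfun_of_gfunBreakpoint_lt hκ ht).deriv, gfun_of_gfunBreakpoint_le hκ ht.le]
  field_simp

lemma mul_deriv_gfun_div_gfunBreakpoint (hκ : 0 < κ) :
    gfunBreakpoint κ * deriv (gfun κ) (gfunBreakpoint κ) / gfun κ (gfunBreakpoint κ) =
      -(1 / 2) := by
  have hc := gfunBreakpoint_pos hκ
  have hq : √(1 / 6) ≠ 0 := by positivity
  rw [(hasDerivAt_gfun_gfunBreakpoint hκ).deriv, gfun_of_gfunBreakpoint_le hκ le_rfl]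
  field_simp
  ring

lemma neg_div_one_sub_mem_Icc {u : ℝ} (h₀ : 0 ≤ u) (h₁ : u ≤ 1 / 3) :
    -u / (1 - u) ∈ Icc (-(1 / 2)) 0 := by
  have hpos : 0 < 1 - u := by linarith
  constructor
  · rw [neg_div, neg_le_neg_iff, div_le_iff₀ hpos]
    linarith
  · exact div_nonpos_of_nonpos_of_nonneg (neg_nonpos.2 h₀) hpos.le

lemma neg_div_add_one_mem_Icc {s : ℝ} (h₀ : 0 ≤ s) (h₁ : s ≤ 1) :
    -s / (s + 1) ∈ Icc (-(1 / 2)) 0 := by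
  have hpos : 0 < s + 1 := by linarith
  constructor
  · rw [neg_div, neg_le_neg_iff, div_le_iff₀ hpos]
    linarith
  · exact div_nonpos_of_nonpos_of_nonneg (neg_nonpos.2 h₀) hpos.le

end

/-- `-1/2 ≤ t * g' t / g t ≤ 0` for every `t ≥ 0`. -/
theorem stmt_9 (κ : ℝ) (hκ : 0 < κ) :
    ∀ t : ℝ, 0 ≤ t →
      -(1 / 2) ≤ t * deriv (gfun κ) t / gfun κ t ∧
        t * deriv (gfun κ) t / gfun κ t ≤ 0 := by
  intro t ht
  rcases lt_trichotomy t (gfunBreakpoint κ) with hlt | rfl | hgt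
  · have habs : |t| < gfunBreakpoint κ := by rwa [abs_of_nonneg ht]
    rw [mul_deriv_gfun_div_of_abs_lt hκ habs]
    exact neg_div_one_sub_mem_Icc (by positivity) (mul_sq_le_of_abs_le hκ habs.le)
  · rw [mul_deriv_gfun_div_gfunBreakpoint hκ]
    norm_num
  · have htpos : 0 < t := (gfunBreakpoint_pos hκ).trans hgt
    rw [mul_deriv_gfun_div_of_gfunBreakpoint_lt hκ hgt]
    exact neg_div_add_one_mem_Icc (div_nonneg (gfunBreakpoint_pos hκ).le htpos.le)
      ((div_le_one htpos).2 hgt.le)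
end
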